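/- arXiv:math/0009054 — 5 statements merged into one kernel-verified Lean document; each statement's English description precedes it below -/
import Mathlib

section
/- With α and β as in the concrete matched pair example, for nearly all (s,t,g) one has α_g(st) = α_{β_t(g)}(s) · α_g(t): concretely, for g ∈ ℝ and s = (a,b), t = (x,y) ∈ H with all relevant quantities nonzero, α_g(s·t) = α_{β_t(g)}(s) · α_g(t) in H. -/
/-- Multiplication on H. -/
noncomputable def Hmul (p q : ℝ × ℝ) : ℝ × ℝ := (p.1 * q.1, p.1 * q.2 + p.2 / q.1)

/-- α_x(a,b) = (a+bx, b) if a+bx > 0 and (-(a+bx), -b) if a+bx < 0. -/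
noncomputable def alpha (x : ℝ) (p : ℝ × ℝ) : ℝ × ℝ :=
  if 0 < p.1 + p.2 * x then (p.1 + p.2 * x, p.2) else (-(p.1 + p.2 * x), -p.2)

/-- β_{(a,b)}(x) = x/(a(a+bx)). -/
noncomputable def beta (p : ℝ × ℝ) (x : ℝ) : ℝ := x / (p.1 * (p.1 + p.2 * x))

/-!
Write `α_x p = ε • shear x p`, where `shear x (a, b) = (a + b x, b)` and `ε = ±1` is the sign of
`a + b x`. The unsigned maps already satisfy the matched-pair identity
`shear g (s t) = shear (β_t g) s · shear g t`, whose first coordinate says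
`(st)_1 + (st)_2 g = (a + b β_t g)(x + y g)`. Since `(ε p)(δ q) = (ε δ)(p q)` for `δ = ±1`, the
signs on the right multiply to the sign of that product, which is the sign on the left.
-/

noncomputable def shear (x : ℝ) (p : ℝ × ℝ) : ℝ × ℝ := (p.1 + p.2 * x, p.2)

lemma sign_mul_sign_self_of_ne_zero {r : ℝ} (hr : r ≠ 0) :
    (SignType.sign r : ℝ) * SignType.sign r = 1 := by
  rcases hr.lt_or_gt with hneg | hpos
  · simp [sign_neg hneg]
  · simp [sign_pos hpos]

lemma alpha_eq_sign_smul_shear {x : ℝ} {p : ℝ × ℝ} (h : p.1 + p.2 * x ≠ 0) :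
    alpha x p = (SignType.sign (p.1 + p.2 * x) : ℝ) • shear x p := by
  rcases h.lt_or_gt with hneg | hpos
  · simp [alpha, shear, sign_neg hneg, not_lt.2 hneg.le]
  · simp [alpha, shear, sign_pos hpos, hpos]

lemma Hmul_smul_smul (ε δ : ℝ) (hδ : δ * δ = 1) (p q : ℝ × ℝ) :
    Hmul (ε • p) (δ • q) = (ε * δ) • Hmul p q := by
  have hδ_inv : δ⁻¹ = δ := inv_eq_of_mul_eq_one_right hδ
  simp only [Hmul, Prod.smul_mk, Prod.smul_fst, Prod.smul_snd, smul_eq_mul, Prod.mk.injEq,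
    div_eq_mul_inv, mul_inv, hδ_inv]
  constructor <;> ring

lemma shear_Hmul (g : ℝ) (s t : ℝ × ℝ) (ht : t.1 ≠ 0) (htg : t.1 + t.2 * g ≠ 0) :
    shear g (Hmul s t) = Hmul (shear (beta t g) s) (shear g t) := by
  obtain ⟨a, b⟩ := s
  obtain ⟨x, y⟩ := t
  simp only [shear, Hmul, beta, Prod.mk.injEq] at *
  constructor <;> field_simp <;> ring

theorem alpha_matched_general (g a b x y : ℝ) (hx : 0 < x)
    (h1 : x + y * g ≠ 0)
    (h2 : a + b * beta (x, y) g ≠ 0) :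
    alpha g (Hmul (a, b) (x, y)) = Hmul (alpha (beta (x, y) g) (a, b)) (alpha g (x, y)) := by
  have hshear := shear_Hmul g (a, b) (x, y) hx.ne' h1
  have h3 : (shear g (Hmul (a, b) (x, y))).1 ≠ 0 := by
    rw [hshear]
    exact mul_ne_zero h2 h1
  rw [alpha_eq_sign_smul_shear h3, alpha_eq_sign_smul_shear (p := (x, y)) h1,
    alpha_eq_sign_smul_shear (p := (a, b)) h2,
    Hmul_smul_smul _ _ (sign_mul_sign_self_of_ne_zero h1)]
  change (SignType.sign (shear g (Hmul (a, b) (x, y))).1 : ℝ) • _ = _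
  rw [hshear]
  simp only [Hmul, shear, sign_mul, SignType.coe_mul]

/-- α_g(st) = α_{β_t(g)}(s) · α_g(t) wherever everything is defined. -/
theorem alpha_matched (g a b x y : ℝ) (ha : 0 < a) (hx : 0 < x)
    (h1 : x + y * g ≠ 0)
    (h2 : a + b * beta (x, y) g ≠ 0)
    (h3 : (Hmul (a, b) (x, y)).1 + (Hmul (a, b) (x, y)).2 * g ≠ 0) :
    alpha g (Hmul (a, b) (x, y)) = Hmul (alpha (beta (x, y) g) (a, b)) (alpha g (x, y)) :=
  alpha_matched_general g a b x y hx h1 h2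
end

section
/- With α and β as in the concrete matched pair example, for nearly all (g,h,s) one has β_s(g+h) = β_{α_h(s)}(g) + β_s(h): concretely, for g, h ∈ ℝ and s = (a,b) ∈ H with all relevant denominators nonzero, β_{(a,b)}(g+h) = β_{α_h(a,b)}(g) + β_{(a,b)}(h). -/
/-! The normalisation `a > 0` in `alpha` is a sign change of the pair, which `beta` does not see;
so `β_{α_h(a,b)} = β_{(a+bh, b)}`, and the matched-pair identity becomes a partial-fraction
identity: with `c = a + bh` and `d = a + b(g+h) = c + bg`, one has `a g + h d = (g + h) c`. -/

theorem beta_neg (p : ℝ × ℝ) (x : ℝ) : beta (-p) x = beta p x := by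
  simp only [beta, Prod.fst_neg, Prod.snd_neg]
  ring_nf

theorem beta_alpha (x : ℝ) (p : ℝ × ℝ) : beta (alpha x p) = beta (p.1 + p.2 * x, p.2) := by
  funext y
  unfold alpha
  split_ifs
  · rfl
  · exact beta_neg (p.1 + p.2 * x, p.2) y

theorem beta_add {a b : ℝ} (g h : ℝ) (ha : a ≠ 0) (hc : a + b * h ≠ 0)
    (hd : a + b * (g + h) ≠ 0) :
    beta (a, b) (g + h) = beta (a + b * h, b) g + beta (a, b) h := by
  have hd' : a + b * h + b * g ≠ 0 := by rwa [add_assoc, ← mul_add, add_comm h]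
  simp only [beta]
  rw [div_add_div _ _ (mul_ne_zero hc hd') (mul_ne_zero ha hc),
    div_eq_div_iff (mul_ne_zero ha hd) (mul_ne_zero (mul_ne_zero hc hd') (mul_ne_zero ha hc))]
  ring

/-- β_s(g+h) = β_{α_h(s)}(g) + β_s(h) wherever everything is defined. -/
theorem beta_matched (g h a b : ℝ) (ha : 0 < a)
    (h1 : a + b * h ≠ 0) (h2 : a + b * (g + h) ≠ 0) :
    beta (a, b) (g + h) = beta (alpha h (a, b)) g + beta (a, b) h := by
  rw [beta_alpha]
  exact beta_add g h ha.ne' h1 h2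
end

section
/- In any unital associative ℝ-algebra containing invertible element A and elements B, C with A self-adjoint, B self-adjoint, C anti-self-adjoint (with respect to an involution *), the relations [A,C] = B and B central are preserved by the comultiplication Δ(A) = A⊗A, Δ(B) = A⊗B + B⊗A⁻¹, Δ(C) = C⊗A⁻² + 1⊗C: that is, [Δ(A), Δ(C)] = Δ(B) and Δ(B) commutes with Δ(A) and Δ(C) in the tensor product algebra. -/
open scoped TensorProduct

/-- Δ(A) = A⊗A, Δ(B) = A⊗B + B⊗A⁻¹, Δ(C) = C⊗A⁻² + 1⊗C preserves the relations
A·A⁻¹ = 1, [A,C] = B, and B central. -/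
theorem delta_preserves_relations {A : Type*} [Ring A] [Algebra ℝ A] [StarRing A]
    (a ainv b c : A)
    (h1 : a * ainv = 1) (h2 : ainv * a = 1)
    (hsa : star a = a) (hsb : star b = b) (hsc : star c = -c)
    (hac : a * c - c * a = b) (hab : a * b = b * a) (hbc : b * c = c * b) :
    (a ⊗ₜ[ℝ] a) * (ainv ⊗ₜ[ℝ] ainv) = 1 ∧
    (a ⊗ₜ[ℝ] a) * (c ⊗ₜ[ℝ] (ainv * ainv) + 1 ⊗ₜ[ℝ] c)
      - (c ⊗ₜ[ℝ] (ainv * ainv) + 1 ⊗ₜ[ℝ] c) * (a ⊗ₜ[ℝ] a)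
      = a ⊗ₜ[ℝ] b + b ⊗ₜ[ℝ] ainv ∧
    (a ⊗ₜ[ℝ] a) * (a ⊗ₜ[ℝ] b + b ⊗ₜ[ℝ] ainv)
      = (a ⊗ₜ[ℝ] b + b ⊗ₜ[ℝ] ainv) * (a ⊗ₜ[ℝ] a) ∧
    (a ⊗ₜ[ℝ] b + b ⊗ₜ[ℝ] ainv) * (c ⊗ₜ[ℝ] (ainv * ainv) + 1 ⊗ₜ[ℝ] c)
      = (c ⊗ₜ[ℝ] (ainv * ainv) + 1 ⊗ₜ[ℝ] c) * (a ⊗ₜ[ℝ] b + b ⊗ₜ[ℝ] ainv) := by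
  -- auxiliary facts in A
  have hib : ainv * b = b * ainv := by
    calc ainv * b = ainv * b * (a * ainv) := by rw [h1, mul_one]
      _ = ainv * (b * a) * ainv := by simp [mul_assoc]
      _ = ainv * (a * b) * ainv := by rw [hab]
      _ = (ainv * a) * (b * ainv) := by simp [mul_assoc]
      _ = b * ainv := by rw [h2, one_mul]
  have key : c * ainv - ainv * c = ainv * (b * ainv) := by
    calc c * ainv - ainv * c
        = (ainv * a) * (c * ainv) - ainv * (c * (a * ainv)) := by
          rw [h2, h1, one_mul, mul_one]
      _ = ainv * ((a * c - c * a) * ainv) := by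
          simp [mul_sub, sub_mul, mul_assoc]
      _ = ainv * (b * ainv) := by rw [hac]
  have hba : ainv * (b * ainv) = b * (ainv * ainv) := by
    rw [← mul_assoc, hib, mul_assoc]
  have hic : ainv * c = c * ainv - b * (ainv * ainv) := by
    rw [← hba, ← key]; abel
  have haii : a * (ainv * ainv) = ainv := by rw [← mul_assoc, h1, one_mul]
  have hiia : (ainv * ainv) * a = ainv := by rw [mul_assoc, h2, mul_one]
  refine ⟨?_, ?_, ?_, ?_⟩
  · simp [Algebra.TensorProduct.tmul_mul_tmul, h1, Algebra.TensorProduct.one_def]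
  · simp only [mul_add, add_mul, Algebra.TensorProduct.tmul_mul_tmul, one_mul, mul_one,
      haii, hiia]
    rw [← hac]
    simp only [TensorProduct.sub_tmul, TensorProduct.tmul_sub]
    abel
  · simp only [mul_add, add_mul, Algebra.TensorProduct.tmul_mul_tmul, hab, h1, h2]
  · simp only [mul_add, add_mul, Algebra.TensorProduct.tmul_mul_tmul, one_mul, mul_one]
    have r1 : ainv * ainv * b = b * (ainv * ainv) := by
      rw [mul_assoc, hib, ← mul_assoc, hib, mul_assoc]
    have r2 : (a * c) ⊗ₜ[ℝ] (b * (ainv * ainv))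
        = (c * a) ⊗ₜ[ℝ] (b * (ainv * ainv)) + b ⊗ₜ[ℝ] (b * (ainv * ainv)) := by
      rw [← TensorProduct.add_tmul]
      congr 1
      rw [← hac]; abel
    have r3 : b ⊗ₜ[ℝ] (ainv * c)
        = b ⊗ₜ[ℝ] (c * ainv) - b ⊗ₜ[ℝ] (b * (ainv * ainv)) := by
      rw [← TensorProduct.tmul_sub, hic]
    rw [r2, r3, r1, hbc.symm, mul_assoc ainv ainv ainv]
    abel
end

section
/- In the unital algebra generated by A, B, C with relations [A,B] = 2B, [A,C] = 2C, [B,C] = C², the comultiplication Δ(A) = A⊗1 + 1⊗A, Δ(B) = B⊗1 + 1⊗B + A⊗C, Δ(C) = C⊗1 + 1⊗C preserves the defining relations: [Δ(A),Δ(B)] = 2Δ(B), [Δ(A),Δ(C)] = 2Δ(C), and [Δ(B),Δ(C)] = Δ(C)². -/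
open scoped TensorProduct

/-- In the algebra with [A,B] = 2B, [A,C] = 2C, [B,C] = C², the comultiplication
Δ(A) = A⊗1 + 1⊗A, Δ(B) = B⊗1 + 1⊗B + A⊗C, Δ(C) = C⊗1 + 1⊗C preserves the relations. -/
theorem delta_preserves_relations' {R : Type*} [Ring R] [Algebra ℝ R]
    (a b c : R)
    (hab : a * b - b * a = 2 * b)
    (hac : a * c - c * a = 2 * c)
    (hbc : b * c - c * b = c * c) :
    (a ⊗ₜ[ℝ] (1 : R) + 1 ⊗ₜ[ℝ] a) * (b ⊗ₜ[ℝ] (1 : R) + 1 ⊗ₜ[ℝ] b + a ⊗ₜ[ℝ] c)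
      - (b ⊗ₜ[ℝ] (1 : R) + 1 ⊗ₜ[ℝ] b + a ⊗ₜ[ℝ] c) * (a ⊗ₜ[ℝ] (1 : R) + 1 ⊗ₜ[ℝ] a)
      = 2 * (b ⊗ₜ[ℝ] (1 : R) + 1 ⊗ₜ[ℝ] b + a ⊗ₜ[ℝ] c) ∧
    (a ⊗ₜ[ℝ] (1 : R) + 1 ⊗ₜ[ℝ] a) * (c ⊗ₜ[ℝ] (1 : R) + 1 ⊗ₜ[ℝ] c)
      - (c ⊗ₜ[ℝ] (1 : R) + 1 ⊗ₜ[ℝ] c) * (a ⊗ₜ[ℝ] (1 : R) + 1 ⊗ₜ[ℝ] a)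
      = 2 * (c ⊗ₜ[ℝ] (1 : R) + 1 ⊗ₜ[ℝ] c) ∧
    (b ⊗ₜ[ℝ] (1 : R) + 1 ⊗ₜ[ℝ] b + a ⊗ₜ[ℝ] c) * (c ⊗ₜ[ℝ] (1 : R) + 1 ⊗ₜ[ℝ] c)
      - (c ⊗ₜ[ℝ] (1 : R) + 1 ⊗ₜ[ℝ] c) * (b ⊗ₜ[ℝ] (1 : R) + 1 ⊗ₜ[ℝ] b + a ⊗ₜ[ℝ] c)
      = (c ⊗ₜ[ℝ] (1 : R) + 1 ⊗ₜ[ℝ] c) * (c ⊗ₜ[ℝ] (1 : R) + 1 ⊗ₜ[ℝ] c) := by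
  have hab' : a * b = 2 * b + b * a := sub_eq_iff_eq_add.mp hab
  have hac' : a * c = 2 * c + c * a := sub_eq_iff_eq_add.mp hac
  have hbc' : b * c = c * c + c * b := sub_eq_iff_eq_add.mp hbc
  refine ⟨?_, ?_, ?_⟩ <;>
  · simp only [mul_add, add_mul, Algebra.TensorProduct.tmul_mul_tmul, one_mul, mul_one,
      hab', hac', hbc', two_mul, TensorProduct.add_tmul, TensorProduct.tmul_add,
      TensorProduct.smul_tmul', TensorProduct.tmul_smul]
    abel
end

section
/- With ε(A) = ε(B) = ε(C) = 0 and S(A) = -A, S(B) = -B + AC, S(C) = -C, the antipode axiom m(S⊗id)Δ(X) = ε(X)·1 = m(id⊗S)Δ(X) holds for X ∈ {A, B, C}, using the relation [A,C] = 2C where needed. -/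
/-- With ε(A) = ε(B) = ε(C) = 0 and S(A) = -A, S(B) = -B + AC, S(C) = -C, the antipode
axiom m(S⊗id)Δ(X) = ε(X)·1 = m(id⊗S)Δ(X) holds for X ∈ {A, B, C}, where
Δ(A) = A⊗1 + 1⊗A, Δ(B) = B⊗1 + 1⊗B + A⊗C, Δ(C) = C⊗1 + 1⊗C. -/
theorem antipode_axiom' {R : Type*} [Ring R] [Algebra ℝ R]
    (a b c : R)
    (hab : a * b - b * a = 2 * b)
    (hac : a * c - c * a = 2 * c)
    (hbc : b * c - c * b = c * c)
    (S : R → R) (hSanti : ∀ x y, S (x * y) = S y * S x) (hS1 : S 1 = 1)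
    (hSa : S a = -a) (hSb : S b = -b + a * c) (hSc : S c = -c) :
    -- m(S⊗id)Δ(A) = ε(A)·1 = m(id⊗S)Δ(A)
    (S a * 1 + S 1 * a = 0 ∧ a * S 1 + 1 * S a = 0) ∧
    -- m(S⊗id)Δ(B) = ε(B)·1 = m(id⊗S)Δ(B)
    (S b * 1 + S 1 * b + S a * c = 0 ∧ b * S 1 + 1 * S b + a * S c = 0) ∧
    -- m(S⊗id)Δ(C) = ε(C)·1 = m(id⊗S)Δ(C)
    (S c * 1 + S 1 * c = 0 ∧ c * S 1 + 1 * S c = 0) := by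
  refine ⟨⟨?_, ?_⟩, ⟨?_, ?_⟩, ⟨?_, ?_⟩⟩ <;>
    simp [hS1, hSa, hSb, hSc] <;> noncomm_ring
end
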